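/- Let (X,ρ) and (Y,σ) be topologically complete metric spaces, and equip X × Y with the maximum metric. Let A ⊆ X and B ⊆ Y be Suslin (analytic) sets in their respective spaces. If A is not σ-lower porous in X and B is not σ-porous in Y, then the Cartesian product A × B is not σ-lower porous in X × Y. -/
import Mathlib


open Metric Filter Set

/-- γ(x,R,M): the supremum of radii r>0 of open balls contained in B(x,R) \ M
(equal to 0 if no such ball exists, by `Real.sSup_empty`). -/
noncomputable def porGamma {X : Type*} [MetricSpace X] (x : X) (R : ℝ) (M : Set X) : ℝ :=
  sSup {r : ℝ | 0 < r ∧ ∃ z : X, Metric.ball z r ⊆ Metric.ball x R \ M}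

/-- `M` is lower porous at `x`: liminf_{R→0+} 2γ(x,R,M)/R > 0. -/
def LowerPorousAt {X : Type*} [MetricSpace X] (M : Set X) (x : X) : Prop :=
  0 < Filter.liminf (fun R => 2 * porGamma x R M / R) (nhdsWithin 0 (Set.Ioi 0))

/-- `M` is (upper) porous at `x`: limsup_{R→0+} 2γ(x,R,M)/R > 0. -/
def UpperPorousAt {X : Type*} [MetricSpace X] (M : Set X) (x : X) : Prop :=
  0 < Filter.limsup (fun R => 2 * porGamma x R M / R) (nhdsWithin 0 (Set.Ioi 0))

section Part1

variable {X : Type*} [MetricSpace X]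

lemma eventually_F0_iff {p : ℝ → Prop} :
    (∀ᶠ R in nhdsWithin (0:ℝ) (Set.Ioi 0), p R) ↔ ∃ δ > 0, ∀ R, 0 < R → R < δ → p R := by
  rw [Filter.eventually_iff, mem_nhdsGT_iff_exists_Ioo_subset]
  constructor
  · rintro ⟨u, hu, h⟩
    exact ⟨u, hu, fun R hR hRu => h ⟨hR, hRu⟩⟩
  · rintro ⟨δ, hδ, h⟩
    exact ⟨δ, hδ, fun R hR => h R hR.1 hR.2⟩

lemma frequently_F0_iff {p : ℝ → Prop} :
    (∃ᶠ R in nhdsWithin (0:ℝ) (Set.Ioi 0), p R) ↔ ∀ δ > 0, ∃ R, 0 < R ∧ R < δ ∧ p R := by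
  constructor
  · intro h δ hδ
    have h2 := h.and_eventually
      (eventually_F0_iff.mpr ⟨δ, hδ, fun R h1 h2 => And.intro h1 h2⟩)
    obtain ⟨R, hp, h1, h2⟩ := h2.exists
    exact ⟨R, h1, h2, hp⟩
  · intro h
    rw [Filter.frequently_iff]
    intro U hU
    rw [mem_nhdsGT_iff_exists_Ioo_subset] at hU
    obtain ⟨u, hu, hsub⟩ := hU
    obtain ⟨R, h1, h2, hp⟩ := h u hu
    exact ⟨R, hsub ⟨h1, h2⟩, hp⟩

lemma porGamma_nonneg (x : X) (R : ℝ) (M : Set X) : 0 ≤ porGamma x R M :=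
  Real.sSup_nonneg fun _ hr => hr.1.le

lemma porGamma_mem_le {x : X} {R r : ℝ} {M : Set X} (hx : x ∈ M)
    (h : r ∈ {r : ℝ | 0 < r ∧ ∃ z : X, ball z r ⊆ ball x R \ M}) : r ≤ R := by
  obtain ⟨hr, z, hz⟩ := h
  have hzz : z ∈ ball x R \ M := hz (mem_ball_self hr)
  have hxz : x ∉ ball z r := fun h' => (hz h').2 hx
  have h1 : r ≤ dist x z := not_lt.mp (by simpa [mem_ball] using hxz)
  have h2 : dist z x < R := by simpa [mem_ball] using hzz.1
  calc r ≤ dist x z := h1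
    _ ≤ R := by rw [dist_comm]; exact h2.le

lemma porGamma_le {x : X} {R : ℝ} {M : Set X} (hx : x ∈ M) (hR : 0 ≤ R) :
    porGamma x R M ≤ R :=
  Real.sSup_le (fun _ hr => porGamma_mem_le hx hr) hR

lemma le_porGamma {x : X} {R r : ℝ} {M : Set X} {z : X} (hx : x ∈ M) (hr : 0 < r)
    (h : ball z r ⊆ ball x R \ M) : r ≤ porGamma x R M :=
  le_csSup ⟨R, fun _ hr' => porGamma_mem_le hx hr'⟩ ⟨hr, z, h⟩

lemma exists_hole_of_lt_porGamma {x : X} {R c : ℝ} {M : Set X} (hc : 0 ≤ c)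
    (h : c < porGamma x R M) : ∃ r > c, ∃ z : X, ball z r ⊆ ball x R \ M := by
  have hne : {r : ℝ | 0 < r ∧ ∃ z : X, ball z r ⊆ ball x R \ M}.Nonempty := by
    by_contra hemp
    rw [Set.not_nonempty_iff_eq_empty] at hemp
    rw [porGamma, hemp, Real.sSup_empty] at h
    exact absurd h (not_lt.mpr hc)
  obtain ⟨r, hrmem, hcr⟩ := exists_lt_of_lt_csSup hne h
  exact ⟨r, hcr, hrmem.2⟩

/-- eventual positivity facts -/
lemma eventually_R_pos : ∀ᶠ R in nhdsWithin (0:ℝ) (Set.Ioi 0), (0:ℝ) < R :=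
  eventually_mem_nhdsWithin

lemma eventually_ratio_nonneg {x : X} {M : Set X} :
    ∀ᶠ R in nhdsWithin (0:ℝ) (Set.Ioi 0), 0 ≤ 2 * porGamma x R M / R :=
  eventually_R_pos.mono fun R hR =>
    div_nonneg (mul_nonneg (by norm_num) (porGamma_nonneg x R M)) hR.le

lemma eventually_ratio_le_two {x : X} {M : Set X} (hx : x ∈ M) :
    ∀ᶠ R in nhdsWithin (0:ℝ) (Set.Ioi 0), 2 * porGamma x R M / R ≤ 2 :=
  eventually_R_pos.mono fun R hR => by
    rw [div_le_iff₀ hR]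
    have := porGamma_le hx (M := M) hR.le
    linarith

/-- from failure of lower porosity at a member point: at arbitrarily small scales,
there is no hole of relative size θ/2. -/
lemma not_lowerPorousAt_frequently {M : Set X} {x : X} (hx : x ∈ M)
    (h : ¬ LowerPorousAt M x) {θ : ℝ} (hθ : 0 < θ) :
    ∀ δ > 0, ∃ R, 0 < R ∧ R < δ ∧ 2 * porGamma x R M / R < θ := by
  rw [LowerPorousAt, not_lt] at h
  have hco : IsCoboundedUnder (· ≥ ·) (nhdsWithin (0:ℝ) (Set.Ioi 0))
      (fun R => 2 * porGamma x R M / R) :=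
    isCoboundedUnder_ge_of_eventually_le _ (eventually_ratio_le_two hx)
  have := frequently_lt_of_liminf_lt hco (lt_of_le_of_lt h hθ)
  exact frequently_F0_iff.mp this

/-- from failure of upper porosity at a member point: at all small scales,
no hole of relative size θ/2. -/
lemma not_upperPorousAt_eventually {M : Set X} {x : X} (hx : x ∈ M)
    (h : ¬ UpperPorousAt M x) {θ : ℝ} (hθ : 0 < θ) :
    ∃ δ > 0, ∀ R, 0 < R → R < δ → 2 * porGamma x R M / R < θ := by
  rw [UpperPorousAt, not_lt] at h
  have hbd : IsBoundedUnder (· ≤ ·) (nhdsWithin (0:ℝ) (Set.Ioi 0))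
      (fun R => 2 * porGamma x R M / R) :=
    ⟨2, eventually_map.2 (eventually_ratio_le_two hx)⟩
  have := eventually_lt_of_limsup_lt (lt_of_le_of_lt h hθ) hbd
  exact eventually_F0_iff.mp this

/-- from lower porosity at a member point: uniform holes at small scales. -/
lemma lowerPorousAt_uniform {M : Set X} {x : X} (hx : x ∈ M)
    (h : LowerPorousAt M x) :
    ∃ c > 0, ∃ δ > 0, ∀ R, 0 < R → R < δ → c * R < porGamma x R M := by
  rw [LowerPorousAt] at h
  set L := Filter.liminf (fun R => 2 * porGamma x R M / R) (nhdsWithin (0:ℝ) (Set.Ioi 0)) with hL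
  have hbd : IsBoundedUnder (· ≥ ·) (nhdsWithin (0:ℝ) (Set.Ioi 0))
      (fun R => 2 * porGamma x R M / R) :=
    ⟨0, eventually_map.2 eventually_ratio_nonneg⟩
  have hev : ∀ᶠ R in nhdsWithin (0:ℝ) (Set.Ioi 0),
      L / 2 < 2 * porGamma x R M / R :=
    eventually_lt_of_lt_liminf (by linarith) hbd
  obtain ⟨δ, hδ, hall⟩ := eventually_F0_iff.mp (hev.and eventually_R_pos)
  refine ⟨L / 4, by linarith, δ, hδ, fun R hR hRδ => ?_⟩
  obtain ⟨h1, h2⟩ := hall R hR hRδ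
  rw [lt_div_iff₀ h2] at h1
  nlinarith [porGamma_nonneg x R M]

end Part1

/-- A set is lower porous if it is lower porous at each of its points. -/
def LowerPorous {X : Type*} [MetricSpace X] (M : Set X) : Prop :=
  ∀ x ∈ M, LowerPorousAt M x

/-- A set is (upper) porous if it is porous at each of its points. -/
def UpperPorous {X : Type*} [MetricSpace X] (M : Set X) : Prop :=
  ∀ x ∈ M, UpperPorousAt M x

/-- A set is σ-lower porous if it is a countable union of lower porous sets. -/
def SigmaLowerPorous {X : Type*} [MetricSpace X] (A : Set X) : Prop :=
  ∃ f : ℕ → Set X, (∀ n, LowerPorous (f n)) ∧ A = ⋃ n, f n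

/-- A set is σ-(upper) porous if it is a countable union of porous sets. -/
def SigmaUpperPorous {X : Type*} [MetricSpace X] (A : Set X) : Prop :=
  ∃ f : ℕ → Set X, (∀ n, UpperPorous (f n)) ∧ A = ⋃ n, f n

/-- A topological space is topologically complete if its topology is induced by
some complete metric. -/
def TopComplete (Y : Type*) [t : TopologicalSpace Y] : Prop :=
  ∃ m : MetricSpace Y, m.toUniformSpace.toTopologicalSpace = t ∧ @CompleteSpace Y m.toUniformSpace

section Part2

variable {X : Type*} [MetricSpace X]

lemma porGamma_mono {x : X} {R : ℝ} {M M' : Set X} (hx : x ∈ M') (h : M' ⊆ M) :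
    porGamma x R M ≤ porGamma x R M' := by
  apply Real.sSup_le _ (porGamma_nonneg x R M')
  rintro r ⟨hr, z, hz⟩
  exact le_porGamma hx hr (fun w hw => ⟨(hz hw).1, fun hwM' => (hz hw).2 (h hwM')⟩)

lemma LowerPorousAt.mono {x : X} {M M' : Set X} (hx : x ∈ M') (h : M' ⊆ M)
    (hp : LowerPorousAt M x) : LowerPorousAt M' x := by
  rw [LowerPorousAt] at hp ⊢
  refine lt_of_lt_of_le hp (liminf_le_liminf ?_ ?_ ?_)
  · exact eventually_R_pos.mono fun R hR => by
      rw [div_le_div_iff_of_pos_right hR]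
      exact mul_le_mul_of_nonneg_left (porGamma_mono hx h) (by norm_num)
  · exact ⟨0, eventually_map.2 eventually_ratio_nonneg⟩
  · exact isCoboundedUnder_ge_of_eventually_le _ (eventually_ratio_le_two hx)

lemma UpperPorousAt.mono {x : X} {M M' : Set X} (hx : x ∈ M') (h : M' ⊆ M)
    (hp : UpperPorousAt M x) : UpperPorousAt M' x := by
  rw [UpperPorousAt] at hp ⊢
  refine lt_of_lt_of_le hp (limsup_le_limsup ?_ ?_ ?_)
  · exact eventually_R_pos.mono fun R hR => by
      rw [div_le_div_iff_of_pos_right hR]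
      exact mul_le_mul_of_nonneg_left (porGamma_mono hx h) (by norm_num)
  · exact isCoboundedUnder_le_of_eventually_le _ eventually_ratio_nonneg
  · exact ⟨2, eventually_map.2 (eventually_ratio_le_two hx)⟩

lemma SigmaLowerPorous.mono {M M' : Set X} (h : SigmaLowerPorous M) (hsub : M' ⊆ M) :
    SigmaLowerPorous M' := by
  obtain ⟨f, hf, rfl⟩ := h
  refine ⟨fun n => f n ∩ M', fun n x hx => ?_, ?_⟩
  · exact (hf n x hx.1).mono hx inter_subset_left
  · rw [← Set.iUnion_inter]
    exact (Set.inter_eq_self_of_subset_right hsub).symm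

lemma SigmaUpperPorous.mono {M M' : Set X} (h : SigmaUpperPorous M) (hsub : M' ⊆ M) :
    SigmaUpperPorous M' := by
  obtain ⟨f, hf, rfl⟩ := h
  refine ⟨fun n => f n ∩ M', fun n x hx => ?_, ?_⟩
  · exact (hf n x hx.1).mono hx inter_subset_left
  · rw [← Set.iUnion_inter]
    exact (Set.inter_eq_self_of_subset_right hsub).symm

lemma sigmaLowerPorous_iUnion {g : ℕ → Set X} (h : ∀ n, SigmaLowerPorous (g n)) :
    SigmaLowerPorous (⋃ n, g n) := by
  choose f hf heq using h
  set e : ℕ ≃ ℕ × ℕ := (Denumerable.eqv (ℕ × ℕ)).symm with he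
  refine ⟨fun k => f (e k).1 (e k).2, fun k => hf _ _, ?_⟩
  ext x
  simp only [mem_iUnion]
  constructor
  · rintro ⟨n, hx⟩
    rw [heq n] at hx
    obtain ⟨m, hm⟩ := mem_iUnion.mp hx
    exact ⟨e.symm (n, m), by simpa using hm⟩
  · rintro ⟨k, hk⟩
    exact ⟨(e k).1, by rw [heq]; exact mem_iUnion.mpr ⟨(e k).2, hk⟩⟩

lemma sigmaUpperPorous_iUnion {g : ℕ → Set X} (h : ∀ n, SigmaUpperPorous (g n)) :
    SigmaUpperPorous (⋃ n, g n) := by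
  choose f hf heq using h
  set e : ℕ ≃ ℕ × ℕ := (Denumerable.eqv (ℕ × ℕ)).symm with he
  refine ⟨fun k => f (e k).1 (e k).2, fun k => hf _ _, ?_⟩
  ext x
  simp only [mem_iUnion]
  constructor
  · rintro ⟨n, hx⟩
    rw [heq n] at hx
    obtain ⟨m, hm⟩ := mem_iUnion.mp hx
    exact ⟨e.symm (n, m), by simpa using hm⟩
  · rintro ⟨k, hk⟩
    exact ⟨(e k).1, by rw [heq]; exact mem_iUnion.mpr ⟨(e k).2, hk⟩⟩

lemma sigmaLowerPorous_empty : SigmaLowerPorous (∅ : Set X) :=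
  ⟨fun _ => ∅, fun _ x hx => absurd hx (notMem_empty x), by simp⟩

lemma sigmaUpperPorous_empty : SigmaUpperPorous (∅ : Set X) :=
  ⟨fun _ => ∅, fun _ x hx => absurd hx (notMem_empty x), by simp⟩

lemma LowerPorous.sigma {M : Set X} (h : LowerPorous M) : SigmaLowerPorous M :=
  ⟨fun _ => M, fun _ => h, (Set.iUnion_const M).symm⟩

lemma UpperPorous.sigma {M : Set X} (h : UpperPorous M) : SigmaUpperPorous M :=
  ⟨fun _ => M, fun _ => h, (Set.iUnion_const M).symm⟩

lemma exists_not_lowerPorousAt {M : Set X} (h : ¬ SigmaLowerPorous M) :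
    ∃ x ∈ M, ¬ LowerPorousAt M x := by
  by_contra h'
  push_neg at h'
  exact h (LowerPorous.sigma h')

lemma exists_not_upperPorousAt {M : Set X} (h : ¬ SigmaUpperPorous M) :
    ∃ x ∈ M, ¬ UpperPorousAt M x := by
  by_contra h'
  push_neg at h'
  exact h (UpperPorous.sigma h')

/-- generic kernel lemma for a σ-ideal-like predicate -/
lemma kernel_generic (I : Set X → Prop)
    (Imono : ∀ {s t : Set X}, I t → s ⊆ t → I s)
    (Iunion : ∀ g : ℕ → Set X, (∀ n, I (g n)) → I (⋃ n, g n))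
    (Iempty : I ∅)
    {S : Set X} (hsep : TopologicalSpace.IsSeparable S) (hS : ¬ I S) :
    ∃ S' : Set X, S' ⊆ S ∧ ¬ I S' ∧ ∀ x ∈ S', ∀ ε > 0, ¬ I (S' ∩ ball x ε) := by
  obtain ⟨D, hDc, hDd⟩ := hsep
  classical
  have Iunion2 : ∀ s t : Set X, I s → I t → I (s ∪ t) := by
    intro s t hs ht
    have := Iunion (fun n => if n = 0 then s else t)
      (fun n => by by_cases h0 : n = 0 <;> simp [h0, hs, ht])
    convert this using 1
    ext w
    simp only [mem_union, mem_iUnion]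
    constructor
    · rintro (h | h)
      exacts [⟨0, by simpa using h⟩, ⟨1, by simpa using h⟩]
    · rintro ⟨n, hn⟩
      by_cases h0 : n = 0
      · rw [h0] at hn; left; simpa using hn
      · rw [if_neg h0] at hn; right; exact hn
  -- family of "bad" balls
  set 𝒞 : Set (Set X) := {V | (∃ d ∈ D, ∃ q : ℚ, V = ball d (q : ℝ)) ∧ I (S ∩ V)} with h𝒞
  have h𝒞c : 𝒞.Countable := by
    have : 𝒞 ⊆ (fun p : X × ℚ => ball p.1 (p.2 : ℝ)) '' (D ×ˢ (univ : Set ℚ)) := by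
      rintro V ⟨⟨d, hd, q, rfl⟩, -⟩
      exact ⟨(d, q), ⟨hd, trivial⟩, rfl⟩
    exact (Set.Countable.image (hDc.prod countable_univ) _).mono this
  have hIsU : I (S ∩ ⋃₀ 𝒞) := by
    rcases Set.eq_empty_or_nonempty 𝒞 with hemp | hne
    · rw [hemp]; simpa using Iempty
    · obtain ⟨g, hg⟩ := Set.Countable.exists_eq_range h𝒞c hne
      have : S ∩ ⋃₀ 𝒞 = ⋃ n, S ∩ g n := by
        rw [hg, Set.sUnion_range, Set.inter_iUnion]
      rw [this]
      refine Iunion _ fun n => ?_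
      have : g n ∈ 𝒞 := by rw [hg]; exact mem_range_self n
      exact this.2
  refine ⟨S \ ⋃₀ 𝒞, diff_subset, ?_, ?_⟩
  · intro hbad
    apply hS
    have : S = (S \ ⋃₀ 𝒞) ∪ (S ∩ ⋃₀ 𝒞) := by
      ext x; by_cases hx : x ∈ ⋃₀ 𝒞 <;> simp [hx]
    rw [this]
    exact Iunion2 _ _ hbad hIsU
  · rintro x ⟨hxS, hxU⟩ ε hε hI
    -- find a rational ball around x inside ball x ε belonging to 𝒞
    have hxD : x ∈ closure D := hDd hxS
    obtain ⟨d, hdD, hdx⟩ := Metric.mem_closure_iff.mp hxD (ε / 4) (by linarith)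
    obtain ⟨q, hq1, hq2⟩ := exists_rat_btwn (show ε / 4 < ε / 2 by linarith)
    have hxball : x ∈ ball d (q : ℝ) := by
      rw [mem_ball]
      exact lt_trans hdx hq1
    have hsub : ball d (q : ℝ) ⊆ ball x ε := by
      intro w hw
      rw [mem_ball] at hw ⊢
      have : dist w d + dist d x < ε := by
        have := hdx
        rw [dist_comm] at this
        calc dist w d + dist d x < (q : ℝ) + ε / 4 := by
              apply add_lt_add hw this
          _ < ε := by linarith
      exact lt_of_le_of_lt (dist_triangle w d x) this
    have hSball : I (S ∩ ball d (q : ℝ)) := by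
      have hdecomp : S ∩ ball d (q : ℝ) ⊆
          ((S \ ⋃₀ 𝒞) ∩ ball x ε) ∪ (S ∩ ⋃₀ 𝒞) := by
        rintro w ⟨hwS, hwb⟩
        by_cases hw : w ∈ ⋃₀ 𝒞
        · exact Or.inr ⟨hwS, hw⟩
        · exact Or.inl ⟨⟨hwS, hw⟩, hsub hwb⟩
      exact Imono (Iunion2 _ _ hI hIsU) hdecomp
    exact hxU ⟨ball d (q : ℝ), ⟨⟨d, hdD, q, rfl⟩, hSball⟩, hxball⟩

end Part2

section Part3

variable {X : Type*} [MetricSpace X]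

/-- the (i,j) uniform piece of a set P -/
def porPiece (P : Set X) (i j : ℕ) : Set X :=
  {p ∈ P | ∀ R : ℝ, 0 < R → R < 1/((j:ℝ)+1) →
    ∃ z, ball z (R/((i:ℝ)+1)) ⊆ ball p R \ P}

lemma lowerPorous_subset_pieces {P : Set X} (hP : LowerPorous P) :
    P ⊆ ⋃ (i : ℕ), ⋃ (j : ℕ), porPiece P i j := by
  intro p hp
  obtain ⟨c, hc, δ, hδ, h⟩ := lowerPorousAt_uniform hp (hP p hp)
  obtain ⟨i, hi⟩ := exists_nat_one_div_lt (show (0:ℝ) < c from hc)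
  obtain ⟨j, hj⟩ := exists_nat_one_div_lt hδ
  refine mem_iUnion.mpr ⟨i, mem_iUnion.mpr ⟨j, hp, fun R hR hRj => ?_⟩⟩
  have hRδ : R < δ := lt_trans hRj hj
  obtain ⟨r, hr, z, hz⟩ := exists_hole_of_lt_porGamma (by positivity) (h R hR hRδ)
  refine ⟨z, subset_trans (ball_subset_ball ?_) hz⟩
  have h2 : R * (1/((i:ℝ)+1)) < R * c := by
    have hipos : (0:ℝ) < 1/((i:ℝ)+1) := by positivity
    exact mul_lt_mul_of_pos_left hi hR
  have e : R / ((i:ℝ)+1) = R * (1/((i:ℝ)+1)) := by ring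
  nlinarith [hr]

lemma closure_porPiece_unifPorous {P : Set X} (i j : ℕ) :
    ∀ p ∈ closure (porPiece P i j), ∀ R : ℝ, 0 < R → R < 1/((j:ℝ)+1) →
      ∃ z, ball z ((1/(2*((i:ℝ)+1))) * R) ⊆ ball p R \ closure (porPiece P i j) := by
  intro p hp R hR hRj
  obtain ⟨q, hqQ, hq⟩ := Metric.mem_closure_iff.mp hp (R/2) (by linarith)
  obtain ⟨z, hz⟩ := hqQ.2 (R/2) (by linarith) (by linarith)
  have hine : ((i:ℝ)+1) ≠ 0 := by positivity
  have erad : (1/(2*((i:ℝ)+1))) * R = (R/2)/((i:ℝ)+1) := by field_simp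
  rw [erad]
  refine ⟨z, fun w hw => ⟨?_, ?_⟩⟩
  · have h1 : w ∈ ball q (R/2) := (hz hw).1
    rw [mem_ball] at h1 ⊢
    calc dist w p ≤ dist w q + dist q p := dist_triangle w q p
      _ < R/2 + R/2 := by
          rw [dist_comm q p]
          exact add_lt_add h1 hq
      _ = R := by ring
  · -- w ∉ closure piece
    have hb : porPiece P i j ⊆ (ball z ((R/2)/((i:ℝ)+1)))ᶜ := by
      intro v hv hvball
      exact (hz hvball).2 hv.1
    have := closure_minimal hb (isOpen_ball.isClosed_compl)
    exact fun hwc => (this hwc) hw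

/-- The core step lemma: a closed uniformly lower porous set in the product cannot be
"everywhere dense" along S × T when S is non-σ-lower porous and T is non-σ-porous. -/
lemma core_lemma {X' Y' : Type*} [MetricSpace X'] [MetricSpace Y']
    {S : Set X'} {T : Set Y'} (hS : ¬ SigmaLowerPorous S) (hT : ¬ SigmaUpperPorous T)
    {Z : Set (X' × Y')} (hZc : IsClosed Z) {c δ : ℝ} (hc : 0 < c) (hδ : 0 < δ)
    (hZ : ∀ p ∈ Z, ∀ R : ℝ, 0 < R → R < δ → ∃ z, ball z (c * R) ⊆ ball p R \ Z) :
    ∃ x ∈ S, ∃ y ∈ T, ∃ ρ > 0, (ball x ρ ×ˢ ball y ρ) ∩ Z = ∅ := by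
  obtain ⟨x₀, hx₀S, hx₀⟩ := exists_not_lowerPorousAt hS
  obtain ⟨y₀, hy₀T, hy₀⟩ := exists_not_upperPorousAt hT
  by_contra hcon
  push_neg at hcon
  have hmem : ∀ x ∈ S, ∀ y ∈ T, (x, y) ∈ Z := by
    intro x hx y hy
    rw [← hZc.closure_eq]
    rw [Metric.mem_closure_iff]
    intro ε hε
    obtain ⟨p, hp1, hp2⟩ := hcon x hx y hy ε hε
    refine ⟨p, hp2, ?_⟩
    rw [ball_prod_same] at hp1
    rw [mem_ball] at hp1
    rw [dist_comm]
    exact hp1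
  obtain ⟨δ₁, hδ₁, hevT⟩ := not_upperPorousAt_eventually hy₀T hy₀ (half_pos hc)
  obtain ⟨R, hR, hRδ₂, hfr⟩ := not_lowerPorousAt_frequently hx₀S hx₀ (half_pos hc)
    (min δ δ₁) (lt_min hδ hδ₁)
  have hRδ : R < δ := lt_of_lt_of_le hRδ₂ (min_le_left _ _)
  have hRδ₁ : R < δ₁ := lt_of_lt_of_le hRδ₂ (min_le_right _ _)
  obtain ⟨zz, hzz⟩ := hZ (x₀, y₀) (hmem x₀ hx₀S y₀ hy₀T) R hR hRδ
  obtain ⟨u, v⟩ := zz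
  rw [← ball_prod_same] at hzz
  have hcR : 0 < c * R := mul_pos hc hR
  -- γ bounds
  have hγS : porGamma x₀ R S < c * R / 4 := by
    have := hfr
    rw [div_lt_iff₀ hR] at this
    linarith
  have hγT : porGamma y₀ R T < c * R / 4 := by
    have := hevT R hR hRδ₁
    rw [div_lt_iff₀ hR] at this
    linarith
  -- find points of S and T inside the hole
  have hXside : ∃ x₁ ∈ S, x₁ ∈ ball u (c * R / 2) := by
    by_contra hno
    push_neg at hno
    have hsub : ball u (c * R / 2) ⊆ ball x₀ R \ S := by
      intro w hw
      constructor
      · have hwin : (w, v) ∈ ball u (c*R) ×ˢ ball v (c*R) :=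
          ⟨ball_subset_ball (by linarith) hw, mem_ball_self hcR⟩
        have := (hzz hwin).1
        rw [mem_ball, Prod.dist_eq] at this
        rw [mem_ball]
        exact lt_of_le_of_lt (le_max_left _ _) this
      · exact fun hwS => (hno w hwS) hw
    have := le_porGamma hx₀S (by linarith) hsub
    linarith
  have hYside : ∃ y₁ ∈ T, y₁ ∈ ball v (c * R / 2) := by
    by_contra hno
    push_neg at hno
    have hsub : ball v (c * R / 2) ⊆ ball y₀ R \ T := by
      intro w hw
      constructor
      · have hwin : (u, w) ∈ ball u (c*R) ×ˢ ball v (c*R) :=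
          ⟨mem_ball_self hcR, ball_subset_ball (by linarith) hw⟩
        have := (hzz hwin).1
        rw [mem_ball, Prod.dist_eq] at this
        rw [mem_ball]
        exact lt_of_le_of_lt (le_max_right _ _) this
      · exact fun hwT => (hno w hwT) hw
    have := le_porGamma hy₀T (by linarith) hsub
    linarith
  obtain ⟨x₁, hx₁S, hx₁⟩ := hXside
  obtain ⟨y₁, hy₁T, hy₁⟩ := hYside
  have hin : (x₁, y₁) ∈ ball u (c*R) ×ˢ ball v (c*R) :=
    ⟨ball_subset_ball (by linarith) hx₁, ball_subset_ball (by linarith) hy₁⟩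
  exact (hzz hin).2 (hmem x₁ hx₁S y₁ hy₁T)

end Part3

section Part4

/-- cylinder set in Baire space -/
def cylSet (s : List ℕ) : Set (ℕ → ℕ) :=
  {τ | ∀ i : ℕ, ∀ h : i < s.length, τ i = s[i]}

lemma cylSet_nil : cylSet [] = univ := by
  ext τ; simp [cylSet]

lemma cylSet_append_subset (s : List ℕ) (m : ℕ) : cylSet (s ++ [m]) ⊆ cylSet s := by
  intro τ hτ i hi
  have hi' : i < (s ++ [m]).length := by simp; omega
  have := hτ i hi'
  rwa [List.getElem_append_left] at this

lemma cylSet_eq_iUnion (s : List ℕ) : cylSet s = ⋃ m : ℕ, cylSet (s ++ [m]) := by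
  ext τ
  constructor
  · intro hτ
    refine mem_iUnion.mpr ⟨τ s.length, fun i hi => ?_⟩
    rcases Nat.lt_or_ge i s.length with h | h
    · rw [List.getElem_append_left h]
      exact hτ i h
    · have : i = s.length := by
        have : i < s.length + 1 := by simpa using hi
        omega
      subst this
      simp
  · intro h
    obtain ⟨m, hm⟩ := mem_iUnion.mp h
    exact cylSet_append_subset s m hm

/-- recursion with choice carrying a relation between consecutive terms -/
lemma dependent_rec {α : Type*} (P : ℕ → α → Prop) (R : ℕ → α → α → Prop)
    (h0 : ∃ a, P 0 a) (hstep : ∀ k a, P k a → ∃ b, P (k+1) b ∧ R k a b) :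
    ∃ u : ℕ → α, (∀ k, P k (u k)) ∧ ∀ k, R k (u k) (u (k+1)) := by
  classical
  obtain ⟨a0, h0⟩ := h0
  choose F hF1 hF2 using hstep
  let u : ∀ k : ℕ, {a : α // P k a} :=
    fun k => Nat.rec ⟨a0, h0⟩ (fun k ih => ⟨F k ih.1 ih.2, hF1 k ih.1 ih.2⟩) k
  exact ⟨fun k => (u k).1, fun k => (u k).2, fun k => hF2 k (u k).1 (u k).2⟩

/-- limit of a sequence whose tails are trapped in small balls, in a complete space -/
lemma exists_limit_of_contracting {W : Type*} [MetricSpace W] [CompleteSpace W]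
    (x : ℕ → W) (hx : ∀ k : ℕ, ∀ i ≥ k+1, x i ∈ Metric.ball (x (k+1)) ((1/2:ℝ)^k)) :
    ∃ a : W, Filter.Tendsto x Filter.atTop (nhds a) := by
  have hcs : CauchySeq x := by
    rw [Metric.cauchySeq_iff]
    intro ε hε
    obtain ⟨k, hk⟩ : ∃ k : ℕ, (1/2:ℝ)^k < ε/2 :=
      exists_pow_lt_of_lt_one (by linarith) (by norm_num)
    refine ⟨k+1, fun i hi j hj => ?_⟩
    have h1 := hx k i hi
    have h2 := hx k j hj
    rw [Metric.mem_ball] at h1 h2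
    calc dist (x i) (x j) ≤ dist (x i) (x (k+1)) + dist (x (k+1)) (x j) :=
          dist_triangle _ _ _
      _ < ε := by
          rw [dist_comm (x (k+1)) (x j)]
          linarith
  exact cauchySeq_tendsto_of_complete hcs

end Part4

section Part5

/-- heredity is preserved by intersecting with an open ball -/
lemma hered_inter_ball {X : Type*} [MetricSpace X] (I : Set X → Prop)
    (Imono : ∀ {s t : Set X}, I t → s ⊆ t → I s)
    {S : Set X} (hS : ∀ x ∈ S, ∀ ε > 0, ¬ I (S ∩ ball x ε))
    (x₀ : X) (ρ : ℝ) :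
    ∀ x ∈ S ∩ ball x₀ ρ, ∀ ε > 0, ¬ I ((S ∩ ball x₀ ρ) ∩ ball x ε) := by
  rintro x ⟨hxS, hxb⟩ ε hε hI
  rw [mem_ball] at hxb
  have hroom : 0 < min ε (ρ - dist x x₀) := lt_min hε (by linarith)
  apply hS x hxS _ hroom
  refine Imono hI ?_
  rintro w ⟨hwS, hwb⟩
  rw [mem_ball] at hwb
  have hw1 : dist w x < ε := lt_of_lt_of_le hwb (min_le_left _ _)
  have hw2 : dist w x < ρ - dist x x₀ := lt_of_lt_of_le hwb (min_le_right _ _)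
  refine ⟨⟨hwS, ?_⟩, mem_ball.mpr hw1⟩
  rw [mem_ball]
  calc dist w x₀ ≤ dist w x + dist x x₀ := dist_triangle w x x₀
    _ < ρ := by linarith

/-- transfer of small neighborhoods to an auxiliary metric inducing the same topology -/
lemma mball_small {W : Type*} (mW m : MetricSpace W)
    (hm : m.toUniformSpace.toTopologicalSpace = mW.toUniformSpace.toTopologicalSpace)
    (x : W) (η : ℝ) (hη : 0 < η) :
    ∃ ε > 0, ∀ w, @dist W mW.toPseudoMetricSpace.toDist w x < ε →
      w ∈ @Metric.ball W m.toPseudoMetricSpace x η := by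
  have h1 : @IsOpen W m.toUniformSpace.toTopologicalSpace
      (@Metric.ball W m.toPseudoMetricSpace x η) :=
    @Metric.isOpen_ball W m.toPseudoMetricSpace x η
  rw [hm] at h1
  obtain ⟨ε, hε, hsub⟩ := (@Metric.isOpen_iff W mW.toPseudoMetricSpace _).mp h1 x
    (@Metric.mem_ball_self W m.toPseudoMetricSpace x η hη)
  exact ⟨ε, hε, fun w hw => hsub ((@Metric.mem_ball W mW.toPseudoMetricSpace x w ε).mpr hw)⟩

/-- instance-free interface extracted from topological completeness -/
lemma topComplete_spec {W : Type*} [mW : MetricSpace W] (hW : TopComplete W) :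
    ∃ V : W → ℕ → Set W,
      (∀ x k, ∃ ε > 0, ∀ w, dist w x < ε → w ∈ V x k) ∧
      (∀ x : ℕ → W, (∀ k, ∀ i ≥ k+1, x i ∈ V (x (k+1)) k) →
        ∃ a, Filter.Tendsto x Filter.atTop (nhds a)) := by
  obtain ⟨m, hmt, hmc⟩ := hW
  refine ⟨fun x k => @Metric.ball W m.toPseudoMetricSpace x ((1/2:ℝ)^k), ?_, ?_⟩
  · intro x k
    exact mball_small mW m hmt x ((1/2:ℝ)^k) (by positivity)
  · intro x hx
    obtain ⟨a, ha⟩ := @exists_limit_of_contracting W m hmc x hx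
    rw [hmt] at ha
    exact ⟨a, ha⟩

/-- the state of the recursive construction -/
structure PorProdState (X Y : Type*) [MetricSpace X] [MetricSpace Y] where
  s : List ℕ
  t : List ℕ
  a : X
  b : Y
  r : ℝ
  SA : Set X
  SB : Set Y

/-- the invariant maintained through the construction -/
def PorInv {X Y : Type*} [MetricSpace X] [MetricSpace Y]
    (f : (ℕ → ℕ) → X) (g : (ℕ → ℕ) → Y) (k : ℕ) (st : PorProdState X Y) : Prop :=
  0 < st.r ∧
  st.s.length = k ∧ st.t.length = k ∧
  st.a ∈ st.SA ∧ st.b ∈ st.SB ∧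
  st.SA ⊆ f '' cylSet st.s ∧ st.SB ⊆ g '' cylSet st.t ∧
  st.SA ⊆ ball st.a st.r ∧ st.SB ⊆ ball st.b st.r ∧
  (∀ x ∈ st.SA, ∀ ε > 0, ¬ SigmaLowerPorous (st.SA ∩ ball x ε)) ∧
  (∀ y ∈ st.SB, ∀ ε > 0, ¬ SigmaUpperPorous (st.SB ∩ ball y ε))

/-- the relation between consecutive states -/
def PorRel {X Y : Type*} [MetricSpace X] [MetricSpace Y]
    (VX : X → ℕ → Set X) (VY : Y → ℕ → Set Y) (Z : ℕ → Set (X × Y))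
    (k : ℕ) (st st' : PorProdState X Y) : Prop :=
  (∃ mm, st'.s = st.s ++ [mm]) ∧ (∃ mm, st'.t = st.t ++ [mm]) ∧
  ball st'.a st'.r ⊆ ball st.a st.r ∧ ball st'.b st'.r ⊆ ball st.b st.r ∧
  (∃ q, st'.r < q ∧ (ball st'.a q ×ˢ ball st'.b q) ∩ Z k = ∅) ∧
  (∀ w ∈ ball st'.a st'.r, w ∈ VX st'.a k) ∧
  (∀ w ∈ ball st'.b st'.r, w ∈ VY st'.b k)

/-- the inductive step of the construction -/
lemma por_step {X Y : Type*} [MetricSpace X] [MetricSpace Y]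
    (VX : X → ℕ → Set X) (VY : Y → ℕ → Set Y)
    (hVX : ∀ x k, ∃ ε > 0, ∀ w, dist w x < ε → w ∈ VX x k)
    (hVY : ∀ y k, ∃ ε > 0, ∀ w, dist w y < ε → w ∈ VY y k)
    (f : (ℕ → ℕ) → X) (g : (ℕ → ℕ) → Y)
    (hsepA : TopologicalSpace.IsSeparable (range f))
    (hsepB : TopologicalSpace.IsSeparable (range g))
    (Z : ℕ → Set (X × Y)) (cc dd : ℕ → ℝ)
    (hcc : ∀ k, 0 < cc k) (hdd : ∀ k, 0 < dd k)
    (hZclosed : ∀ k, IsClosed (Z k))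
    (hZpor : ∀ k, ∀ p ∈ Z k, ∀ R : ℝ, 0 < R → R < dd k →
      ∃ z, ball z (cc k * R) ⊆ ball p R \ Z k)
    (k : ℕ) (st : PorProdState X Y) (h : PorInv f g k st) :
    ∃ st', PorInv f g (k+1) st' ∧ PorRel VX VY Z k st st' := by
  obtain ⟨hr, hsl, htl, haSA, hbSB, hSAf, hSBg, hSAb, hSBb, hheredA, hheredB⟩ := h
  -- SA is non-σ-lower porous
  have hSAnot : ¬ SigmaLowerPorous st.SA := by
    have := hheredA st.a haSA st.r hr
    rwa [Set.inter_eq_self_of_subset_left hSAb] at this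
  have hSBnot : ¬ SigmaUpperPorous st.SB := by
    have := hheredB st.b hbSB st.r hr
    rwa [Set.inter_eq_self_of_subset_left hSBb] at this
  -- digit descent on the X side
  have hdigitA : ∃ mm, ¬ SigmaLowerPorous (st.SA ∩ f '' cylSet (st.s ++ [mm])) := by
    by_contra hall
    push_neg at hall
    apply hSAnot
    refine SigmaLowerPorous.mono (sigmaLowerPorous_iUnion hall) ?_
    intro x hx
    have := hSAf hx
    rw [cylSet_eq_iUnion, Set.image_iUnion] at this
    obtain ⟨mm, hmm⟩ := mem_iUnion.mp this
    exact mem_iUnion.mpr ⟨mm, hx, hmm⟩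
  obtain ⟨mm, hW⟩ := hdigitA
  have hdigitB : ∃ mm, ¬ SigmaUpperPorous (st.SB ∩ g '' cylSet (st.t ++ [mm])) := by
    by_contra hall
    push_neg at hall
    apply hSBnot
    refine SigmaUpperPorous.mono (sigmaUpperPorous_iUnion hall) ?_
    intro x hx
    have := hSBg hx
    rw [cylSet_eq_iUnion, Set.image_iUnion] at this
    obtain ⟨mm, hmm⟩ := mem_iUnion.mp this
    exact mem_iUnion.mpr ⟨mm, hx, hmm⟩
  obtain ⟨mm', hW'⟩ := hdigitB
  -- kernels
  obtain ⟨S, hSsub, hSnot, hShered⟩ :=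
    kernel_generic SigmaLowerPorous (fun h hsub => h.mono hsub)
      (fun g hg => sigmaLowerPorous_iUnion hg) sigmaLowerPorous_empty
      (hsepA.mono (fun x hx => (image_subset_range f _) hx.2)) hW
  obtain ⟨T, hTsub, hTnot, hThered⟩ :=
    kernel_generic SigmaUpperPorous (fun h hsub => h.mono hsub)
      (fun g hg => sigmaUpperPorous_iUnion hg) sigmaUpperPorous_empty
      (hsepB.mono (fun x hx => (image_subset_range g _) hx.2)) hW'
  -- core lemma
  obtain ⟨x, hxS, y, hyT, ρ, hρ, hole⟩ :=
    core_lemma hSnot hTnot (hZclosed k) (hcc k) (hdd k) (hZpor k)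
  -- smallness in the auxiliary metrics
  obtain ⟨εX, hεX, hsmallX⟩ := hVX x k
  obtain ⟨εY, hεY, hsmallY⟩ := hVY y k
  -- room inside the current balls
  have hxball : x ∈ ball st.a st.r := hSAb (hSsub hxS).1
  have hyball : y ∈ ball st.b st.r := hSBb (hTsub hyT).1
  rw [mem_ball] at hxball hyball
  set r' : ℝ := min (ρ/2) (min (st.r - dist x st.a) (min (st.r - dist y st.b) (min εX εY)))
    with hr'def
  have hr' : 0 < r' := by
    refine lt_min (by linarith) (lt_min (by linarith) (lt_min (by linarith)
      (lt_min hεX hεY)))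
  have hr'ρ : r' ≤ ρ/2 := min_le_left _ _
  have hr'a : r' ≤ st.r - dist x st.a := le_trans (min_le_right _ _) (min_le_left _ _)
  have hr'b : r' ≤ st.r - dist y st.b :=
    le_trans (min_le_right _ _) (le_trans (min_le_right _ _) (min_le_left _ _))
  have hr'X : r' ≤ εX :=
    le_trans (min_le_right _ _) (le_trans (min_le_right _ _)
      (le_trans (min_le_right _ _) (min_le_left _ _)))
  have hr'Y : r' ≤ εY :=
    le_trans (min_le_right _ _) (le_trans (min_le_right _ _)
      (le_trans (min_le_right _ _) (min_le_right _ _)))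
  refine ⟨⟨st.s ++ [mm], st.t ++ [mm'], x, y, r', S ∩ ball x r', T ∩ ball y r'⟩,
    ⟨hr', by simp [hsl], by simp [htl], ⟨hxS, mem_ball_self hr'⟩, ⟨hyT, mem_ball_self hr'⟩,
     fun w hw => (hSsub hw.1).2, fun w hw => (hTsub hw.1).2,
     inter_subset_right, inter_subset_right,
     hered_inter_ball SigmaLowerPorous (fun h hsub => h.mono hsub) hShered x r',
     hered_inter_ball SigmaUpperPorous (fun h hsub => h.mono hsub) hThered y r'⟩,
    ⟨⟨mm, rfl⟩, ⟨mm', rfl⟩, ?_, ?_, ⟨ρ, by linarith, hole⟩, ?_, ?_⟩⟩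
  · intro w hw
    rw [mem_ball] at hw ⊢
    calc dist w st.a ≤ dist w x + dist x st.a := dist_triangle w x st.a
      _ < st.r := by linarith
  · intro w hw
    rw [mem_ball] at hw ⊢
    calc dist w st.b ≤ dist w y + dist y st.b := dist_triangle w y st.b
      _ < st.r := by linarith
  · intro w hw
    rw [mem_ball] at hw
    exact hsmallX w (by linarith)
  · intro w hw
    rw [mem_ball] at hw
    exact hsmallY w (by linarith)

end Part5

/-- If `A` is a non-σ-lower porous Suslin set in a topologically complete metric space
`X` and `B` is a non-σ-porous Suslin set in a topologically complete metric space `Y`,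
then `A × B` is not σ-lower porous in `X × Y` with the maximum metric. -/
theorem not_sigmaLowerPorous_prod {X Y : Type*} [MetricSpace X] [MetricSpace Y]
    (hX : TopComplete X) (hY : TopComplete Y) (A : Set X) (B : Set Y)
    (hA : MeasureTheory.AnalyticSet A) (hB : MeasureTheory.AnalyticSet B)
    (hA' : ¬ SigmaLowerPorous A) (hB' : ¬ SigmaUpperPorous B) :
    ¬ SigmaLowerPorous (A ×ˢ B) := by
  intro hcov
  classical
  -- A and B are nonempty
  rcases Set.eq_empty_or_nonempty A with hAe | hAne
  · exact hA' (hAe ▸ sigmaLowerPorous_empty)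
  rcases Set.eq_empty_or_nonempty B with hBe | hBne
  · exact hB' (hBe ▸ sigmaUpperPorous_empty)
  -- Suslin schemes
  rw [MeasureTheory.AnalyticSet] at hA hB
  rcases hA with hAe' | ⟨f, hfc, hfr⟩
  · exact (hAne.ne_empty hAe').elim
  rcases hB with hBe' | ⟨g, hgc, hgr⟩
  · exact (hBne.ne_empty hBe').elim
  -- complete auxiliary metrics, via the instance-free interface
  obtain ⟨VX, hVX1, hVX2⟩ := topComplete_spec hX
  obtain ⟨VY, hVY1, hVY2⟩ := topComplete_spec hY
  -- the cover by lower porous sets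
  obtain ⟨P, hP, hPeq⟩ := hcov
  -- enumerate the closed uniformly porous sets to avoid
  set enc : ℕ × ℕ × ℕ → ℕ := fun t => Denumerable.eqv (ℕ × ℕ × ℕ) t with henc
  set e : ℕ → ℕ × ℕ × ℕ := fun k => (Denumerable.eqv (ℕ × ℕ × ℕ)).symm k with he
  set Z : ℕ → Set (X × Y) :=
    fun k => closure (porPiece (P (e k).1) (e k).2.1 (e k).2.2) with hZ
  set cc : ℕ → ℝ := fun k => 1/(2*(((e k).2.1 : ℝ)+1)) with hcc'
  set dd : ℕ → ℝ := fun k => 1/(((e k).2.2 : ℝ)+1) with hdd'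
  have hZclosed : ∀ k, IsClosed (Z k) := fun k => isClosed_closure
  have hcc : ∀ k, 0 < cc k := fun k => by rw [hcc']; positivity
  have hdd : ∀ k, 0 < dd k := fun k => by rw [hdd']; positivity
  have hZpor : ∀ k, ∀ p ∈ Z k, ∀ R : ℝ, 0 < R → R < dd k →
      ∃ z, ball z (cc k * R) ⊆ ball p R \ Z k :=
    fun k => closure_porPiece_unifPorous _ _
  have hABZ : A ×ˢ B ⊆ ⋃ k, Z k := by
    rw [hPeq]
    intro p hp
    obtain ⟨n, hn⟩ := mem_iUnion.mp hp
    have hpc := lowerPorous_subset_pieces (hP n) hn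
    obtain ⟨i, hi⟩ := mem_iUnion.mp hpc
    obtain ⟨j, hj⟩ := mem_iUnion.mp hi
    refine mem_iUnion.mpr ⟨enc (n, i, j), ?_⟩
    show p ∈ closure (porPiece (P (e (enc (n,i,j))).1) (e (enc (n,i,j))).2.1
      (e (enc (n,i,j))).2.2)
    have heq : e (enc (n, i, j)) = (n, i, j) := by
      rw [he, henc]
      exact Equiv.symm_apply_apply _ _
    rw [heq]
    exact subset_closure hj
  -- separability
  have hsepA : TopologicalSpace.IsSeparable (range f) := TopologicalSpace.isSeparable_range hfc
  have hsepB : TopologicalSpace.IsSeparable (range g) := TopologicalSpace.isSeparable_range hgc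
  -- initial state
  obtain ⟨A₀, hA₀sub, hA₀not, hA₀hered⟩ :=
    kernel_generic SigmaLowerPorous (fun h hsub => h.mono hsub)
      (fun gg hg => sigmaLowerPorous_iUnion hg) sigmaLowerPorous_empty
      (hfr ▸ hsepA) hA'
  obtain ⟨B₀, hB₀sub, hB₀not, hB₀hered⟩ :=
    kernel_generic SigmaUpperPorous (fun h hsub => h.mono hsub)
      (fun gg hg => sigmaUpperPorous_iUnion hg) sigmaUpperPorous_empty
      (hgr ▸ hsepB) hB'
  have hA₀ne : A₀.Nonempty := by
    rcases Set.eq_empty_or_nonempty A₀ with h | h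
    · exact absurd (h ▸ sigmaLowerPorous_empty) hA₀not
    · exact h
  have hB₀ne : B₀.Nonempty := by
    rcases Set.eq_empty_or_nonempty B₀ with h | h
    · exact absurd (h ▸ sigmaUpperPorous_empty) hB₀not
    · exact h
  obtain ⟨a₀, ha₀⟩ := hA₀ne
  obtain ⟨b₀, hb₀⟩ := hB₀ne
  have h0 : ∃ st : PorProdState X Y, PorInv f g 0 st := by
    refine ⟨⟨[], [], a₀, b₀, 1, A₀ ∩ ball a₀ 1, B₀ ∩ ball b₀ 1⟩,
      one_pos, rfl, rfl, ⟨ha₀, mem_ball_self one_pos⟩, ⟨hb₀, mem_ball_self one_pos⟩,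
      ?_, ?_, inter_subset_right, inter_subset_right,
      hered_inter_ball SigmaLowerPorous (fun h hsub => h.mono hsub) hA₀hered a₀ 1,
      hered_inter_ball SigmaUpperPorous (fun h hsub => h.mono hsub) hB₀hered b₀ 1⟩
    · show A₀ ∩ ball a₀ 1 ⊆ f '' cylSet []
      rw [cylSet_nil, image_univ]
      intro w hw
      have : w ∈ A := hA₀sub hw.1
      rwa [← hfr] at this
    · show B₀ ∩ ball b₀ 1 ⊆ g '' cylSet []
      rw [cylSet_nil, image_univ]
      intro w hw
      have : w ∈ B := hB₀sub hw.1
      rwa [← hgr] at this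
  -- the recursion
  obtain ⟨u, hInv, hRel⟩ := dependent_rec (PorInv f g) (PorRel VX VY Z) h0
    (por_step VX VY hVX1 hVY1 f g hsepA hsepB Z cc dd hcc hdd hZclosed hZpor)
  -- unpack and take limits
  have hrpos : ∀ k, 0 < (u k).r := fun k => (hInv k).1
  have hchain : ∀ k d : ℕ, ball ((u (k+d)).a) ((u (k+d)).r) ⊆ ball ((u k).a) ((u k).r) := by
    intro k d
    induction d with
    | zero => exact subset_rfl
    | succ d ih => exact subset_trans ((hRel (k+d)).2.2.1) ih
  have hchainb : ∀ k d : ℕ, ball ((u (k+d)).b) ((u (k+d)).r) ⊆ ball ((u k).b) ((u k).r) := by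
    intro k d
    induction d with
    | zero => exact subset_rfl
    | succ d ih => exact subset_trans ((hRel (k+d)).2.2.2.1) ih
  have hmem : ∀ k j, k ≤ j → (u j).a ∈ ball ((u k).a) ((u k).r) := by
    intro k j hkj
    obtain ⟨d, rfl⟩ := Nat.exists_eq_add_of_le hkj
    exact hchain k d (mem_ball_self (hrpos _))
  have hmemb : ∀ k j, k ≤ j → (u j).b ∈ ball ((u k).b) ((u k).r) := by
    intro k j hkj
    obtain ⟨d, rfl⟩ := Nat.exists_eq_add_of_le hkj
    exact hchainb k d (mem_ball_self (hrpos _))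
  -- limits via the auxiliary complete metrics
  obtain ⟨aL, haL⟩ := hVX2 (fun k => (u k).a)
    (fun k i hi => (hRel k).2.2.2.2.2.1 _ (hmem (k+1) i hi))
  obtain ⟨bL, hbL⟩ := hVY2 (fun k => (u k).b)
    (fun k i hi => (hRel k).2.2.2.2.2.2 _ (hmemb (k+1) i hi))
  -- digits
  choose dX hdX using fun k => (hRel k).1
  choose dY hdY using fun k => (hRel k).2.1
  have hlenX : ∀ k, ((u k).s).length = k := fun k => (hInv k).2.1
  have hlenY : ∀ k, ((u k).t).length = k := fun k => (hInv k).2.2.1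
  have hgetX : ∀ k i, ∀ h : i < ((u k).s).length, ((u k).s)[i] = dX i := by
    intro k
    induction k with
    | zero => intro i h; rw [hlenX 0] at h; omega
    | succ k ih =>
      intro i h
      simp only [hdX k] at h ⊢
      rcases Nat.lt_or_ge i ((u k).s).length with hlt | hge
      · rw [List.getElem_append_left hlt]
        exact ih i hlt
      · have hik : i = ((u k).s).length := by
          have h2 : i < ((u k).s).length + 1 := by simpa using h
          omega
        rw [List.getElem_append_right (by omega)]
        simp [hik, hlenX k]
  have hgetY : ∀ k i, ∀ h : i < ((u k).t).length, ((u k).t)[i] = dY i := by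
    intro k
    induction k with
    | zero => intro i h; rw [hlenY 0] at h; omega
    | succ k ih =>
      intro i h
      simp only [hdY k] at h ⊢
      rcases Nat.lt_or_ge i ((u k).t).length with hlt | hge
      · rw [List.getElem_append_left hlt]
        exact ih i hlt
      · have hik : i = ((u k).t).length := by
          have h2 : i < ((u k).t).length + 1 := by simpa using h
          omega
        rw [List.getElem_append_right (by omega)]
        simp [hik, hlenY k]
  -- witnesses in the scheme
  have hτex : ∀ k, ∃ τ, τ ∈ cylSet ((u k).s) ∧ f τ = (u k).a := by
    intro k
    obtain ⟨τ, h1, h2⟩ := (hInv k).2.2.2.2.2.1 (hInv k).2.2.2.1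
    exact ⟨τ, h1, h2⟩
  choose τX hτX1 hτX2 using hτex
  have hτex' : ∀ k, ∃ τ, τ ∈ cylSet ((u k).t) ∧ g τ = (u k).b := by
    intro k
    obtain ⟨τ, h1, h2⟩ := (hInv k).2.2.2.2.2.2.1 (hInv k).2.2.2.2.1
    exact ⟨τ, h1, h2⟩
  choose τY hτY1 hτY2 using hτex'
  -- convergence of the scheme witnesses
  have hτXtend : Filter.Tendsto τX Filter.atTop (nhds dX) := by
    rw [tendsto_pi_nhds]
    intro i
    apply tendsto_nhds_of_eventually_eq
    filter_upwards [eventually_ge_atTop (i+1)] with k hk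
    have hlt : i < ((u k).s).length := by rw [hlenX k]; omega
    rw [hτX1 k i hlt]
    exact hgetX k i hlt
  have hτYtend : Filter.Tendsto τY Filter.atTop (nhds dY) := by
    rw [tendsto_pi_nhds]
    intro i
    apply tendsto_nhds_of_eventually_eq
    filter_upwards [eventually_ge_atTop (i+1)] with k hk
    have hlt : i < ((u k).t).length := by rw [hlenY k]; omega
    rw [hτY1 k i hlt]
    exact hgetY k i hlt
  have haLA : aL ∈ A := by
    have h1 : Filter.Tendsto (fun k => f (τX k)) Filter.atTop (nhds (f dX)) :=
      (hfc.tendsto dX).comp hτXtend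
    have h2 : (fun k => f (τX k)) = fun k => (u k).a := funext hτX2
    rw [h2] at h1
    have : aL = f dX := tendsto_nhds_unique haL h1
    rw [this, ← hfr]
    exact mem_range_self dX
  have hbLB : bL ∈ B := by
    have h1 : Filter.Tendsto (fun k => g (τY k)) Filter.atTop (nhds (g dY)) :=
      (hgc.tendsto dY).comp hτYtend
    have h2 : (fun k => g (τY k)) = fun k => (u k).b := funext hτY2
    rw [h2] at h1
    have : bL = g dY := tendsto_nhds_unique hbL h1
    rw [this, ← hgr]
    exact mem_range_self dY
  -- the limit point is in some Z k, contradiction with the dodging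
  obtain ⟨k₀, hk₀⟩ := mem_iUnion.mp (hABZ (Set.mk_mem_prod haLA hbLB))
  obtain ⟨q, hq, hdodge⟩ := (hRel k₀).2.2.2.2.1
  have hdista : dist aL ((u (k₀+1)).a) ≤ (u (k₀+1)).r := by
    apply le_of_tendsto (haL.dist (tendsto_const_nhds (x := (u (k₀+1)).a)))
    filter_upwards [eventually_ge_atTop (k₀+1)] with j hj
    exact le_of_lt (mem_ball.mp (hmem (k₀+1) j hj))
  have hdistb : dist bL ((u (k₀+1)).b) ≤ (u (k₀+1)).r := by
    apply le_of_tendsto (hbL.dist (tendsto_const_nhds (x := (u (k₀+1)).b)))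
    filter_upwards [eventually_ge_atTop (k₀+1)] with j hj
    exact le_of_lt (mem_ball.mp (hmemb (k₀+1) j hj))
  have hfinal : (aL, bL) ∈ (ball ((u (k₀+1)).a) q ×ˢ ball ((u (k₀+1)).b) q) ∩ Z k₀ := by
    refine ⟨Set.mk_mem_prod ?_ ?_, hk₀⟩
    · rw [mem_ball]; linarith
    · rw [mem_ball]; linarith
  rw [hdodge] at hfinal
  exact hfinal
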